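/- arXiv:0804.3734 — 2 statements merged into one kernel-verified Lean document; each statement's English description precedes it below -/
import Mathlib

section
/- Let F : ℝ² → ℝ be continuous, α > 0, a, b, λ₁, ω₁ ∈ ℝ, and define C₁ = (1/2π)∫₀^{2π} F(cos s, sin s) sin² s ds, C₂ = (1/2π)∫₀^{2π} F(cos s, sin s) cos s sin s ds, C₃ = (1/2π)∫₀^{2π} F(cos s, sin s) cos² s ds. Then (1/2π)∫₀^{2π} F(cos s, sin s)(λ₁ sin s + ω₁ cos s)[ b ∫₀^∞ cos(s−r)e^{−αr} dr − a ∫₀^∞ sin(s−r)e^{−αr} dr ] ds = (1/(α²+1)) [ (b − α a)(ω₁ C₂ + λ₁ C₁) + (a + α b)(ω₁ C₃ + λ₁ C₂) ]. -/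
/-!
The inner integrals are the real and imaginary parts of the Laplace transform
`∫₀^∞ e^{i(s-r)} e^{-αr} dr = e^{is} / (α + i)`. Substituting them turns the outer integrand into
`F(cos s, sin s)` times a quadratic form in `(cos s, sin s)`, whose mean over a period is a linear
combination of `C₁, C₂, C₃`.
-/

open MeasureTheory Complex

theorem cexp_neg_mul_add_mul_I (α s r : ℝ) :
    cexp (↑(-α * r) + ↑(s - r) * I) = cexp (s * I) * cexp ((-(α:ℂ) - I) * r) := by
  rw [← Complex.exp_add]
  push_cast
  ring_nf

theorem integral_Ioi_exp_neg_mul_cexp_mul_I (α : ℝ) (hα : 0 < α) (s : ℝ) :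
    ∫ r in Set.Ioi (0:ℝ), cexp (↑(-α * r) + ↑(s - r) * I) = cexp (s * I) / (α + I) := by
  have hre : (-(α:ℂ) - I).re < 0 := by simpa using hα
  simp_rw [cexp_neg_mul_add_mul_I, integral_const_mul, integral_exp_mul_complex_Ioi hre,
    ofReal_zero, mul_zero, Complex.exp_zero, ← neg_add', neg_div_neg_eq, mul_one_div]

theorem integrableOn_Ioi_exp_neg_mul_cexp_mul_I (α : ℝ) (hα : 0 < α) (s : ℝ) :
    IntegrableOn (fun r : ℝ => cexp (↑(-α * r) + ↑(s - r) * I)) (Set.Ioi 0) := by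
  have hre : (-(α:ℂ) - I).re < 0 := by simpa using hα
  simp_rw [cexp_neg_mul_add_mul_I]
  exact (integrableOn_exp_mul_complex_Ioi hre 0).const_mul _

theorem exp_mul_I_div_ofReal_add_I_re (α s : ℝ) :
    (cexp (s * I) / (α + I)).re = (α * Real.cos s + Real.sin s) / (α ^ 2 + 1) := by
  simp only [div_re, exp_ofReal_mul_I_re, exp_ofReal_mul_I_im, add_re, add_im, ofReal_re,
    ofReal_im, I_re, I_im, normSq_apply]
  ring

theorem exp_mul_I_div_ofReal_add_I_im (α s : ℝ) :
    (cexp (s * I) / (α + I)).im = (α * Real.sin s - Real.cos s) / (α ^ 2 + 1) := by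
  simp only [div_im, exp_ofReal_mul_I_re, exp_ofReal_mul_I_im, add_re, add_im, ofReal_re,
    ofReal_im, I_re, I_im, normSq_apply]
  ring

theorem integral_Ioi_cos_sub_mul_exp_neg_mul (α : ℝ) (hα : 0 < α) (s : ℝ) :
    ∫ r in Set.Ioi (0:ℝ), Real.cos (s - r) * Real.exp (-α * r) =
      (α * Real.cos s + Real.sin s) / (α ^ 2 + 1) := by
  have hre : ∀ r : ℝ,
      Real.cos (s - r) * Real.exp (-α * r) = RCLike.re (cexp (↑(-α * r) + ↑(s - r) * I)) := by
    intro r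
    rw [RCLike.re_to_complex, exp_re, mul_comm]
    simp
  simp_rw [hre]
  rw [integral_re (integrableOn_Ioi_exp_neg_mul_cexp_mul_I α hα s),
    integral_Ioi_exp_neg_mul_cexp_mul_I α hα, RCLike.re_to_complex,
    exp_mul_I_div_ofReal_add_I_re]

theorem integral_Ioi_sin_sub_mul_exp_neg_mul (α : ℝ) (hα : 0 < α) (s : ℝ) :
    ∫ r in Set.Ioi (0:ℝ), Real.sin (s - r) * Real.exp (-α * r) =
      (α * Real.sin s - Real.cos s) / (α ^ 2 + 1) := by
  have him : ∀ r : ℝ,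
      Real.sin (s - r) * Real.exp (-α * r) = RCLike.im (cexp (↑(-α * r) + ↑(s - r) * I)) := by
    intro r
    rw [RCLike.im_to_complex, exp_im, mul_comm]
    simp
  simp_rw [him]
  rw [integral_im (integrableOn_Ioi_exp_neg_mul_cexp_mul_I α hα s),
    integral_Ioi_exp_neg_mul_cexp_mul_I α hα, RCLike.im_to_complex,
    exp_mul_I_div_ofReal_add_I_im]

/-- Explicit evaluation of the synchronization integral σ for indirectly coupled
λ-ω oscillators in terms of the Fourier-type coefficients `C₁, C₂, C₃`. -/
theorem stmt_11 (F : ℝ × ℝ → ℝ) (hF : Continuous F)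
    (α : ℝ) (hα : 0 < α) (a b lam₁ om₁ : ℝ)
    (C₁ C₂ C₃ : ℝ)
    (hC₁ : C₁ = (1 / (2 * Real.pi)) *
      ∫ s in (0:ℝ)..(2 * Real.pi), F (Real.cos s, Real.sin s) * (Real.sin s)^2)
    (hC₂ : C₂ = (1 / (2 * Real.pi)) *
      ∫ s in (0:ℝ)..(2 * Real.pi), F (Real.cos s, Real.sin s) * Real.cos s * Real.sin s)
    (hC₃ : C₃ = (1 / (2 * Real.pi)) *
      ∫ s in (0:ℝ)..(2 * Real.pi), F (Real.cos s, Real.sin s) * (Real.cos s)^2) :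
    (1 / (2 * Real.pi)) *
      ∫ s in (0:ℝ)..(2 * Real.pi),
        F (Real.cos s, Real.sin s) * (lam₁ * Real.sin s + om₁ * Real.cos s) *
          (b * (∫ r in Set.Ioi (0:ℝ), Real.cos (s - r) * Real.exp (-α * r)) -
           a * (∫ r in Set.Ioi (0:ℝ), Real.sin (s - r) * Real.exp (-α * r))) =
    (1 / (α^2 + 1)) *
      ((b - α * a) * (om₁ * C₂ + lam₁ * C₁) + (a + α * b) * (om₁ * C₃ + lam₁ * C₂)) := by
  have hα₁ : α ^ 2 + 1 ≠ 0 := by positivity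
  have hintegrand : ∀ s : ℝ,
      F (Real.cos s, Real.sin s) * (lam₁ * Real.sin s + om₁ * Real.cos s) *
          (b * (∫ r in Set.Ioi (0:ℝ), Real.cos (s - r) * Real.exp (-α * r)) -
           a * (∫ r in Set.Ioi (0:ℝ), Real.sin (s - r) * Real.exp (-α * r))) =
        1 / (α ^ 2 + 1) * ((b - α * a) * lam₁ * (F (Real.cos s, Real.sin s) * Real.sin s ^ 2) +
          ((b - α * a) * om₁ + (a + α * b) * lam₁) *
            (F (Real.cos s, Real.sin s) * Real.cos s * Real.sin s) +
          (a + α * b) * om₁ * (F (Real.cos s, Real.sin s) * Real.cos s ^ 2)) := by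
    intro s
    rw [integral_Ioi_cos_sub_mul_exp_neg_mul α hα, integral_Ioi_sin_sub_mul_exp_neg_mul α hα]
    field_simp
    ring
  simp_rw [hintegrand]
  rw [intervalIntegral.integral_const_mul, intervalIntegral.integral_add,
    intervalIntegral.integral_add, intervalIntegral.integral_const_mul, intervalIntegral.integral_const_mul,
    intervalIntegral.integral_const_mul, hC₁, hC₂, hC₃]
  · field_simp
    ring
  all_goals exact Continuous.intervalIntegrable (by fun_prop) _ _
end

section
/- Suppose C : ℝ → ℝ is a differentiable periodic function satisfying C'(t) = J_IN + (l + ν(t))(C_ER − C(t)) − k_C C(t), where J_IN, l, k_C, C_ER > 0 and ν : ℝ → ℝ is continuous with ν(t) ≥ 0 for all t. Then 0 < C(t) ≤ max( (J_IN + l C_ER)/(k_C + l), C_ER ) for all t. -/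
/-!
A periodic solution attains its minimum and maximum, and at both points `C' = 0`. Solving the
equilibrium equation `J_IN + (l + ν)(C_ER - C) - k_C C = 0` with `ν ≥ 0` shows that every such
equilibrium value is positive and at most `max ((J_IN + l C_ER) / (k_C + l)) C_ER`; the bounds at
the extrema then hold everywhere.
-/

open Set

namespace Function.Periodic

variable {α : Type*} [LinearOrder α] [TopologicalSpace α] {f : ℝ → α} {c : ℝ}

theorem exists_forall_le_of_continuous [ClosedIicTopology α] (hp : Periodic f c) (hc : c ≠ 0)
    (hf : Continuous f) : ∃ a, ∀ t, f a ≤ f t := by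
  obtain ⟨_, ⟨a, rfl⟩, ha⟩ := (hp.compact_of_continuous hc hf).exists_isLeast (range_nonempty f)
  exact ⟨a, fun t => ha ⟨t, rfl⟩⟩

theorem exists_forall_ge_of_continuous [ClosedIciTopology α] (hp : Periodic f c) (hc : c ≠ 0)
    (hf : Continuous f) : ∃ b, ∀ t, f t ≤ f b := by
  obtain ⟨_, ⟨b, rfl⟩, hb⟩ := (hp.compact_of_continuous hc hf).exists_isGreatest (range_nonempty f)
  exact ⟨b, fun t => hb ⟨t, rfl⟩⟩

end Function.Periodic

section Equilibrium

variable {JIN l kC CER v x : ℝ}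

theorem pos_of_flux_eq_zero (hJ : 0 < JIN) (hl : 0 ≤ l) (hk : 0 ≤ kC) (hE : 0 ≤ CER)
    (hv : 0 ≤ v) (h : JIN + (l + v) * (CER - x) - kC * x = 0) : 0 < x := by
  by_contra! hx
  nlinarith [mul_nonneg (add_nonneg hl hv) (sub_nonneg.2 (hx.trans hE)),
    mul_nonpos_of_nonneg_of_nonpos hk hx]

theorem le_max_of_flux_eq_zero (hkl : 0 < kC + l) (hv : 0 ≤ v)
    (h : JIN + (l + v) * (CER - x) - kC * x = 0) : x ≤ max ((JIN + l * CER) / (kC + l)) CER := by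
  by_contra! hx
  obtain ⟨hxA, hxE⟩ := max_lt_iff.1 hx
  rw [div_lt_iff₀ hkl] at hxA
  nlinarith [mul_nonpos_of_nonneg_of_nonpos hv (sub_nonpos.2 hxE.le)]

end Equilibrium

theorem stmt_14_general (JIN l kC CER T : ℝ)
    (hJ : 0 < JIN) (hl : 0 < l) (hk : 0 < kC) (hE : 0 < CER) (hT : 0 < T)
    (ν : ℝ → ℝ) (hνpos : ∀ t, 0 ≤ ν t)
    (C : ℝ → ℝ) (hper : ∀ t, C (t + T) = C t)
    (hode : ∀ t, HasDerivAt C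
      (JIN + (l + ν t) * (CER - C t) - kC * C t) t) :
    ∀ t, 0 < C t ∧ C t ≤ max ((JIN + l * CER) / (kC + l)) CER := by
  have hC : Continuous C := continuous_iff_continuousAt.2 fun t => (hode t).continuousAt
  obtain ⟨a, ha⟩ := Function.Periodic.exists_forall_le_of_continuous hper hT.ne' hC
  obtain ⟨b, hb⟩ := Function.Periodic.exists_forall_ge_of_continuous hper hT.ne' hC
  have hCa : 0 < C a :=
    pos_of_flux_eq_zero hJ hl.le hk.le hE.le (hνpos a)
      (IsLocalMin.hasDerivAt_eq_zero (IsMinOn.isLocalMin (fun t _ => ha t) Filter.univ_mem) (hode a))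
  have hCb : C b ≤ max ((JIN + l * CER) / (kC + l)) CER :=
    le_max_of_flux_eq_zero (by linarith) (hνpos b)
      (IsLocalMax.hasDerivAt_eq_zero (IsMaxOn.isLocalMax (fun t _ => hb t) Filter.univ_mem) (hode b))
  exact fun t => ⟨hCa.trans_le (ha t), (hb t).trans hCb⟩

/-- A priori bounds for a periodic solution of the calcium equation
`C' = J_IN + (l + ν(t))(C_ER - C) - k_C C`. -/
theorem stmt_14 (JIN l kC CER T : ℝ)
    (hJ : 0 < JIN) (hl : 0 < l) (hk : 0 < kC) (hE : 0 < CER) (hT : 0 < T)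
    (ν : ℝ → ℝ) (hν : Continuous ν) (hνpos : ∀ t, 0 ≤ ν t)
    (C : ℝ → ℝ) (hper : ∀ t, C (t + T) = C t)
    (hode : ∀ t, HasDerivAt C
      (JIN + (l + ν t) * (CER - C t) - kC * C t) t) :
    ∀ t, 0 < C t ∧ C t ≤ max ((JIN + l * CER) / (kC + l)) CER :=
  stmt_14_general JIN l kC CER T hJ hl hk hE hT ν hνpos C hper hode
end
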